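/- For every integer m ≥ 1, real q > 0 and α real, the q-Abel polynomial A_m^{(q,α)}(x) := x ∏_{j=1}^{m-1} (x q^j - α[m]) satisfies the monomial expansion A_m^{(q,α)}(x) = ∑_{k=1}^{m} (-1)^{m-k} qbinom(m-1, m-k) q^{binom(k,2)} [m]^{m-k} α^{m-k} x^k, where [m] := ∑_{i=0}^{m-1} q^i and binom(k,2) = k(k-1)/2. -/
import Mathlib

open Finset Matrix

noncomputable def qInt (q : ℝ) (m : ℕ) : ℝ := ∑ i ∈ Finset.range m, q ^ i

noncomputable def qFact (q : ℝ) (m : ℕ) : ℝ := ∏ i ∈ Finset.range m, qInt q (i + 1)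

noncomputable def qBinom (q : ℝ) (m k : ℕ) : ℝ :=
  if k ≤ m then qFact q m / (qFact q k * qFact q (m - k)) else 0

noncomputable def qAbel (q α : ℝ) (m : ℕ) (x : ℝ) : ℝ :=
  if m = 0 then 1 else x * ∏ j ∈ Finset.Icc 1 (m - 1), (x * q ^ j - α * qInt q m)

lemma qInt_pos {q : ℝ} (hq : 0 < q) {m : ℕ} (hm : 1 ≤ m) : 0 < qInt q m := by
  unfold qInt
  exact Finset.sum_pos (fun i _ => pow_pos hq i) (Finset.nonempty_range_iff.mpr (by omega))

lemma qFact_pos {q : ℝ} (hq : 0 < q) (m : ℕ) : 0 < qFact q m := by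
  unfold qFact
  exact Finset.prod_pos (fun i _ => qInt_pos hq (by omega))

lemma qFact_succ (q : ℝ) (m : ℕ) : qFact q (m+1) = qFact q m * qInt q (m+1) := by
  unfold qFact; rw [Finset.prod_range_succ]

lemma qFact_zero (q : ℝ) : qFact q 0 = 1 := by
  unfold qFact; simp

lemma qInt_add (q : ℝ) (a b : ℕ) : qInt q (a + b) = qInt q a + q ^ a * qInt q b := by
  unfold qInt
  rw [Finset.sum_range_add, Finset.mul_sum]
  simp [pow_add]

lemma qBinom_zero {q : ℝ} (hq : 0 < q) (n : ℕ) : qBinom q n 0 = 1 := by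
  unfold qBinom
  rw [if_pos (Nat.zero_le n), qFact_zero]
  simp [div_self (qFact_pos hq n).ne']

lemma qBinom_pascal {q : ℝ} (hq : 0 < q) (n i : ℕ) :
    qBinom q (n+1) (i+1) = q ^ (i+1) * qBinom q n (i+1) + qBinom q n i := by
  unfold qBinom
  rcases lt_trichotomy i n with h | rfl | h
  · obtain ⟨t, rfl⟩ : ∃ t, n = i + 1 + t := ⟨n - i - 1, by omega⟩
    rw [if_pos (by omega), if_pos (by omega), if_pos (by omega)]
    have h1 : i + 1 + t + 1 - (i + 1) = t + 1 := by omega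
    have h2 : i + 1 + t - (i + 1) = t := by omega
    have h3 : i + 1 + t - i = t + 1 := by omega
    rw [h1, h2, h3]
    have e1 : qFact q (i + 1 + t + 1) = qFact q (i + 1 + t) * qInt q (i + 1 + t + 1) :=
      qFact_succ q _
    have e2 : qFact q (i + 1) = qFact q i * qInt q (i + 1) := qFact_succ q i
    have e3 : qFact q (t + 1) = qFact q t * qInt q (t + 1) := qFact_succ q t
    have e4 : qInt q (i + 1 + t + 1) = qInt q (i + 1) + q ^ (i + 1) * qInt q (t + 1) := by
      simpa [add_assoc] using qInt_add q (i + 1) (t + 1)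
    have p1 := (qFact_pos hq (i + 1 + t)).ne'
    have p2 := (qFact_pos hq i).ne'
    have p3 := (qFact_pos hq t).ne'
    have p4 := (qInt_pos hq (show 1 ≤ i + 1 by omega)).ne'
    have p5 := (qInt_pos hq (show 1 ≤ t + 1 by omega)).ne'
    rw [e1, e2, e3, e4]
    field_simp
    ring
  · rw [if_pos (by omega), if_neg (by omega), if_pos (by omega)]
    have h1 : i + 1 - (i + 1) = 0 := by omega
    have h2 : i - i = 0 := by omega
    rw [h1, h2, qFact_zero, mul_one, mul_one, div_self (qFact_pos hq (i+1)).ne',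
        div_self (qFact_pos hq i).ne']
    ring
  · rw [if_neg (by omega), if_neg (by omega), if_neg (by omega)]
    ring

lemma prod_expand (q c x : ℝ) (hq : 0 < q) (n : ℕ) :
    ∏ j ∈ Finset.Icc 1 n, (x * q ^ j - c) =
      ∑ i ∈ Finset.range (n + 1),
        (-c) ^ i * qBinom q n i * q ^ ((n + 1 - i).choose 2) * x ^ (n - i) := by
  induction n with
  | zero => simp [qBinom_zero hq]
  | succ n ih =>
    rw [Finset.prod_Icc_succ_top (by omega), ih]
    -- RHS manipulation
    have key :
        ∑ i ∈ Finset.range (n + 2),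
          (-c) ^ i * qBinom q (n+1) i * q ^ ((n + 2 - i).choose 2) * x ^ (n + 1 - i)
        = (q ^ (n+1) * x) * (∑ i ∈ Finset.range (n + 1),
            (-c) ^ i * qBinom q n i * q ^ ((n + 1 - i).choose 2) * x ^ (n - i))
          + (-c) * (∑ i ∈ Finset.range (n + 1),
            (-c) ^ i * qBinom q n i * q ^ ((n + 1 - i).choose 2) * x ^ (n - i)) := by
      rw [Finset.sum_range_succ' (fun i =>
        (-c) ^ i * qBinom q (n+1) i * q ^ ((n + 2 - i).choose 2) * x ^ (n + 1 - i)) (n+1)]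
      have pascal : ∀ i ∈ Finset.range (n+1),
          (-c) ^ (i+1) * qBinom q (n+1) (i+1) * q ^ ((n + 2 - (i+1)).choose 2) * x ^ (n + 1 - (i+1))
          = ((-c) ^ (i+1) * (q ^ (i+1) * qBinom q n (i+1)) * q ^ ((n + 1 - i).choose 2) * x ^ (n - i))
            + (-c) * ((-c) ^ i * qBinom q n i * q ^ ((n + 1 - i).choose 2) * x ^ (n - i)) := by
        intro i hi
        have h1 : n + 2 - (i+1) = n + 1 - i := by omega
        have h2 : n + 1 - (i+1) = n - i := by omega
        rw [h1, h2, qBinom_pascal hq]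
        ring
      rw [Finset.sum_congr rfl pascal, Finset.sum_add_distrib, ← Finset.mul_sum]
      -- first piece plus the i = 0 term equals q^{n+1} x S
      have split : (q ^ (n+1) * x) * (∑ i ∈ Finset.range (n + 1),
            (-c) ^ i * qBinom q n i * q ^ ((n + 1 - i).choose 2) * x ^ (n - i))
          = (∑ i ∈ Finset.range (n+1),
              (-c) ^ (i+1) * (q ^ (i+1) * qBinom q n (i+1)) * q ^ ((n + 1 - i).choose 2) * x ^ (n - i))
            + (-c) ^ 0 * qBinom q (n+1) 0 * q ^ ((n + 2 - 0).choose 2) * x ^ (n + 1 - 0) := by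
        rw [Finset.mul_sum, Finset.sum_range_succ' (fun i =>
          q ^ (n+1) * x * ((-c) ^ i * qBinom q n i * q ^ ((n + 1 - i).choose 2) * x ^ (n - i))) n]
        rw [Finset.sum_range_succ (fun i =>
          (-c) ^ (i+1) * (q ^ (i+1) * qBinom q n (i+1)) * q ^ ((n + 1 - i).choose 2) * x ^ (n - i))]
        have hz : qBinom q n (n+1) = 0 := by unfold qBinom; rw [if_neg (by omega)]
        have hc : ∀ i ∈ Finset.range n,
            q ^ (n+1) * x * ((-c) ^ (i+1) * qBinom q n (i+1) * q ^ ((n + 1 - (i+1)).choose 2) * x ^ (n - (i+1)))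
            = (-c) ^ (i+1) * (q ^ (i+1) * qBinom q n (i+1)) * q ^ ((n + 1 - i).choose 2) * x ^ (n - i) := by
          intro i hi
          simp only [Finset.mem_range] at hi
          obtain ⟨j, hj⟩ : ∃ j, n - i = j + 1 := ⟨n - i - 1, by omega⟩
          rw [show n + 1 - (i+1) = j + 1 from by omega,
              show n - (i+1) = j from by omega,
              show n + 1 - i = j + 2 from by omega, hj]
          have hch : (j + 2).choose 2 = (j + 1).choose 2 + (j + 1) := by
            rw [Nat.choose_succ_succ, Nat.choose_one_right]; exact add_comm _ _
          rw [hch, show n + 1 = (i + 1) + (j + 1) from by omega, pow_add, pow_add]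
          ring
        rw [Finset.sum_congr rfl hc, hz, qBinom_zero hq]
        have hch2 : (n + 2 - 0).choose 2 = (n + 1 - 0).choose 2 + (n + 1) := by
          simp only [Nat.sub_zero]
          rw [Nat.choose_succ_succ, Nat.choose_one_right]
          exact add_comm _ _
        rw [hch2]
        simp only [Nat.sub_zero, Nat.sub_self, hz, qBinom_zero hq]
        rw [pow_add]
        ring
      rw [split]
      ring
    rw [key]
    ring
  
theorem qAbel_monomial_expansion (q α x : ℝ) (hq : 0 < q) (m : ℕ) (hm : 1 ≤ m) :
    qAbel q α m x =
      ∑ k ∈ Finset.Icc 1 m,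
        (-1 : ℝ) ^ (m - k) * qBinom q (m - 1) (m - k) * q ^ (k.choose 2) *
          qInt q m ^ (m - k) * α ^ (m - k) * x ^ k := by
  obtain ⟨n, rfl⟩ : ∃ n, m = n + 1 := ⟨m - 1, by omega⟩
  unfold qAbel
  rw [if_neg (by omega)]
  simp only [Nat.add_sub_cancel]
  rw [prod_expand q (α * qInt q (n+1)) x hq n, Finset.mul_sum]
  refine Finset.sum_nbij' (fun i => n + 1 - i) (fun k => n + 1 - k) ?_ ?_ ?_ ?_ ?_
  · intro i hi; simp only [Finset.mem_range] at hi; simp only [Finset.mem_Icc]; omega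
  · intro k hk; simp only [Finset.mem_Icc] at hk; simp only [Finset.mem_range]; omega
  · intro i hi; simp only [Finset.mem_range] at hi
    show n + 1 - (n + 1 - i) = i
    omega
  · intro k hk; simp only [Finset.mem_Icc] at hk
    show n + 1 - (n + 1 - k) = k
    omega
  · intro i hi
    simp only [Finset.mem_range] at hi
    show x * ((-(α * qInt q (n+1))) ^ i * qBinom q n i * q ^ ((n + 1 - i).choose 2) * x ^ (n - i)) =
      (-1 : ℝ) ^ (n + 1 - (n + 1 - i)) * qBinom q n (n + 1 - (n + 1 - i)) *
        q ^ ((n + 1 - i).choose 2) * qInt q (n+1) ^ (n + 1 - (n + 1 - i)) *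
        α ^ (n + 1 - (n + 1 - i)) * x ^ (n + 1 - i)
    rw [show n + 1 - (n + 1 - i) = i from by omega]
    have h3 : (-(α * qInt q (n+1))) ^ i = (-1 : ℝ) ^ i * qInt q (n+1) ^ i * α ^ i := by
      rw [show -(α * qInt q (n+1)) = (-1) * qInt q (n+1) * α by ring, mul_pow, mul_pow]
    rw [h3, show n + 1 - i = n - i + 1 from by omega, pow_succ]
    ring
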